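/- arXiv:0907.3527 — 2 statements merged into one kernel-verified Lean document; each statement's English description precedes it below -/
import Mathlib

section
/- Let K be a field, n a natural number, G an invertible symmetric n×n matrix over K, and A an n×n matrix over K satisfying Aᵀ * G * A = G. Then (det A)² = 1, the constant coefficient of charpoly(A) equals (−1)ⁿ · det A, and the reversed polynomial satisfies reverse(charpoly(A)) = ((−1)ⁿ · det A) · charpoly(A); that is, the characteristic polynomial of A is palindromic up to the sign (−1)ⁿ · det A. -/
/-!
Since `Aᵀ G A = G`, the transpose `Aᵀ = G A⁻¹ G⁻¹` is conjugate to `A⁻¹`, so `A` and `A⁻¹` have the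
same characteristic polynomial. On the other hand `charpoly (A⁻¹)` is the reverse of `charpoly A`
up to the factor `(-1)ⁿ det A⁻¹`, and `det A⁻¹ = det A` because `det A ^ 2 = 1`.
-/

open Polynomial Matrix

namespace Matrix

variable {R : Type*} [CommRing R] {n : Type*} [Fintype n] [DecidableEq n]

theorem charpoly_coeff_zero_eq_neg_one_pow_mul_det (A : Matrix n n R) :
    A.charpoly.coeff 0 = (-1) ^ Fintype.card n * A.det := by
  rw [det_eq_sign_charpoly_coeff, ← mul_assoc, ← pow_add, ← two_mul, pow_mul, neg_one_sq,
    one_pow, one_mul]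

theorem det_sq_eq_one_of_transpose_mul_mul_eq {G A : Matrix n n R} (hG : IsUnit G.det)
    (hA : Aᵀ * G * A = G) : A.det ^ 2 = 1 := by
  have h := congrArg det hA
  rw [det_mul, det_mul, det_transpose] at h
  exact (hG.mul_eq_right).mp (by linear_combination h)

theorem charpoly_inv_eq_of_transpose_mul_mul_eq {G A : Matrix n n R} (hG : IsUnit G.det)
    (hA : Aᵀ * G * A = G) : A⁻¹.charpoly = A.charpoly := by
  have hAdet : IsUnit A.det :=
    .of_pow_eq_one (det_sq_eq_one_of_transpose_mul_mul_eq hG hA) two_ne_zero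
  have hAt : Aᵀ = G * A⁻¹ * G⁻¹ := calc
    Aᵀ = Aᵀ * G * A * A⁻¹ * G⁻¹ := by
      rw [mul_nonsing_inv_cancel_right _ _ hAdet, mul_nonsing_inv_cancel_right _ _ hG]
    _ = G * A⁻¹ * G⁻¹ := by rw [hA]
  rw [← charpoly_transpose A, hAt, charpoly_mul_comm, ← mul_assoc, nonsing_inv_mul _ hG,
    one_mul]

theorem charpolyRev_eq_of_charpoly_inv_eq {A : Matrix n n R} (hdet : A.det ^ 2 = 1)
    (h : A⁻¹.charpoly = A.charpoly) :
    A.charpolyRev = C ((-1) ^ Fintype.card n * A.det) * A.charpoly := by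
  have hAdet : IsUnit A.det := IsUnit.of_pow_eq_one hdet two_ne_zero
  have hinv : Ring.inverse A.det = A.det := calc
    Ring.inverse A.det = Ring.inverse A.det * (A.det * A.det) := by rw [← sq, hdet, mul_one]
    _ = A.det := Ring.inverse_mul_cancel_left _ _ hAdet
  have hsign : (C ((-1) ^ Fintype.card n * A.det)) ^ 2 = 1 := by
    rw [← C_pow, mul_pow, hdet, mul_one, pow_right_comm, neg_one_sq, one_pow, C_1]
  rw [← h, charpoly_inv A ((isUnit_iff_isUnit_det A).mpr hAdet), hinv]
  simp only [map_mul, map_pow, map_neg, map_one] at hsign ⊢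
  linear_combination (-A.charpolyRev) * hsign

end Matrix

theorem charpoly_palindromic_of_preserves_form_general
    {K : Type*} [Field K] {n : ℕ}
    (G A : Matrix (Fin n) (Fin n) K)
    (hG : IsUnit G)
    (hA : Aᵀ * G * A = G) :
    A.det ^ 2 = 1 ∧
    A.charpoly.coeff 0 = (-1) ^ n * A.det ∧
    A.charpoly.reverse = Polynomial.C ((-1) ^ n * A.det) * A.charpoly := by
  have hGdet := (isUnit_iff_isUnit_det G).mp hG
  have hdet := det_sq_eq_one_of_transpose_mul_mul_eq hGdet hA
  refine ⟨hdet, by simpa only [Fintype.card_fin] using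
    charpoly_coeff_zero_eq_neg_one_pow_mul_det A, ?_⟩
  simpa only [reverse_charpoly, Fintype.card_fin] using
    charpolyRev_eq_of_charpoly_inv_eq hdet (charpoly_inv_eq_of_transpose_mul_mul_eq hGdet hA)

/-- If `A` preserves a nondegenerate symmetric bilinear form with Gram matrix `G`,
then `(det A)² = 1`, the constant coefficient of `charpoly A` is `(-1)^n * det A`,
and `charpoly A` is palindromic up to the sign `(-1)^n * det A`. -/
theorem charpoly_palindromic_of_preserves_form
    {K : Type*} [Field K] {n : ℕ}
    (G A : Matrix (Fin n) (Fin n) K)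
    (hG : IsUnit G) (hGsymm : Gᵀ = G)
    (hA : Aᵀ * G * A = G) :
    A.det ^ 2 = 1 ∧
    A.charpoly.coeff 0 = (-1) ^ n * A.det ∧
    A.charpoly.reverse = Polynomial.C ((-1) ^ n * A.det) * A.charpoly :=
  charpoly_palindromic_of_preserves_form_general G A hG hA
end

section
/- Let K be an algebraically closed field, n a natural number, G an invertible symmetric n×n matrix over K, and A an n×n matrix over K satisfying Aᵀ * G * A = G. Then the number, counted with multiplicity, of roots of the characteristic polynomial of A that are not roots of unity is even. -/
/-!
From `Aᵀ G A = G` one gets `A⁻¹ = G⁻¹ Aᵀ G`, so `A⁻¹` and `A` have the same characteristic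
polynomial. Since the roots of `charpoly A⁻¹` are the inverses of those of `charpoly A`, the
multiset of roots is stable under `α ↦ α⁻¹`. This involution preserves the non-roots of unity and
has no fixed point among them (`α⁻¹ = α` forces `α² = 1`), so they pair off.
-/

open Polynomial Matrix
open scoped Classical

theorem Multiset.even_card_of_map_involutive {α : Type*} {σ : α → α}
    (hσ : Function.Involutive σ) {s : Multiset α} (hs : s.map σ = s)
    (hfix : ∀ a ∈ s, σ a ≠ a) : Even (Multiset.card s) := by
  have hcount : ∀ a, s.count (σ a) = s.count a := fun a => by
    conv_lhs => rw [← hs]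
    exact count_map_eq_count' σ s hσ.injective a
  rw [← ZMod.natCast_eq_zero_iff_even, ← toFinset_sum_count_eq, Nat.cast_sum]
  refine Finset.sum_involution (fun a _ => σ a) (fun a _ => ?_)
    (fun a ha _ => hfix a (mem_toFinset.mp ha)) (fun a ha => ?_) (fun a _ => hσ a)
  · rw [hcount, ← two_mul]
    exact mul_eq_zero_of_left rfl _
  · rw [mem_toFinset] at ha ⊢
    rw [← hs]
    exact mem_map_of_mem σ ha

namespace Polynomial

variable {K : Type*} [Field K]

theorem reverse_X_sub_C {a : K} (ha : a ≠ 0) : (X - C a).reverse = C (-a) * (X - C a⁻¹) := by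
  have hX : (X : K[X]).reverse = 1 := by rw [← one_mul X, ← C_1, reverse_mul_X, reverse_C]
  rw [sub_eq_add_neg, ← C_neg, reverse_add_C, hX, mul_sub, ← C_mul, neg_mul, mul_inv_cancel₀ ha]
  simp only [natDegree_X, pow_one, C_neg, C_1]
  ring

theorem roots_reverse_prod_X_sub_C {s : Multiset K} (hs : 0 ∉ s) :
    (s.map (X - C ·)).prod.reverse.roots = s.map (·⁻¹) := by
  induction s using Multiset.induction_on with
  | empty => rw [Multiset.map_zero, Multiset.prod_zero, ← C_1, reverse_C, roots_C, Multiset.map_zero]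
  | cons a s ih =>
    rw [Multiset.mem_cons, not_or] at hs
    rw [Multiset.map_cons, Multiset.prod_cons, reverse_mul_of_domain, roots_mul, ih hs.2,
      reverse_X_sub_C (Ne.symm hs.1), roots_C_mul _ (neg_ne_zero.mpr (Ne.symm hs.1)),
      roots_X_sub_C, Multiset.map_cons, Multiset.singleton_add]
    simp [reverse_eq_zero, X_sub_C_ne_zero, Multiset.prod_eq_zero_iff]

theorem roots_reverse_of_splits {p : K[X]} (hp : p.Splits) (h0 : 0 ∉ p.roots) :
    p.reverse.roots = p.roots.map (·⁻¹) := by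
  rcases eq_or_ne p 0 with rfl | hp0
  · simp
  conv_lhs => rw [hp.eq_prod_roots, reverse_mul_of_domain, reverse_C,
    roots_C_mul _ (leadingCoeff_ne_zero.mpr hp0)]
  exact roots_reverse_prod_X_sub_C h0

end Polynomial

namespace Matrix

variable {n K : Type*} [Fintype n] [DecidableEq n] [Field K]

theorem zero_notMem_roots_charpoly {A : Matrix n n K} (hA : IsUnit A) : 0 ∉ A.charpoly.roots := by
  rw [mem_roots A.charpoly_monic.ne_zero, IsRoot, ← coeff_zero_eq_eval_zero]
  intro h
  have hdet := det_eq_sign_charpoly_coeff A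
  rw [h, mul_zero] at hdet
  exact ((isUnit_iff_isUnit_det A).mp hA).ne_zero hdet

theorem roots_charpoly_inv [IsAlgClosed K] {A : Matrix n n K} (hA : IsUnit A) :
    A⁻¹.charpoly.roots = A.charpoly.roots.map (·⁻¹) := by
  have hdet : IsUnit A.det := (isUnit_iff_isUnit_det A).mp hA
  rw [charpoly_inv A hA, ← reverse_charpoly, ← C_1, ← C_neg, ← C_pow, ← C_mul, roots_C_mul,
    roots_reverse_of_splits (IsAlgClosed.splits _) (zero_notMem_roots_charpoly hA)]
  exact mul_ne_zero (pow_ne_zero _ (neg_ne_zero.mpr one_ne_zero))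
    (by rw [Ring.inverse_eq_inv']; exact inv_ne_zero hdet.ne_zero)

variable {G A : Matrix n n K}

theorem isUnit_of_transpose_mul_mul_self (hG : IsUnit G) (hA : Aᵀ * G * A = G) : IsUnit A := by
  have hdetG := ((isUnit_iff_isUnit_det G).mp hG).ne_zero
  have hdet := congrArg det hA
  rw [det_mul, det_mul, det_transpose] at hdet
  rw [isUnit_iff_isUnit_det, isUnit_iff_ne_zero]
  intro h0
  rw [h0, mul_zero] at hdet
  exact hdetG hdet.symm

theorem charpoly_inv_of_transpose_mul_mul_self (hG : IsUnit G) (hA : Aᵀ * G * A = G) :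
    A⁻¹.charpoly = A.charpoly := by
  have hAinv : A⁻¹ = G⁻¹ * Aᵀ * G := by
    refine inv_eq_left_inv ?_
    rw [mul_assoc, mul_assoc, ← mul_assoc Aᵀ, hA,
      nonsing_inv_mul G ((isUnit_iff_isUnit_det G).mp hG)]
  rw [hAinv, ← charpoly_transpose A]
  exact charpoly_units_conj' hG.unit Aᵀ

end Matrix

theorem even_card_charpoly_roots_not_rootOfUnity_of_preserves_form_general
    {K : Type*} [Field K] [IsAlgClosed K] {n : ℕ}
    (G A : Matrix (Fin n) (Fin n) K)
    (hG : IsUnit G)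
    (hA : Aᵀ * G * A = G) :
    Even (Multiset.card
      (A.charpoly.roots.filter fun α => ¬ ∃ k : ℕ, 0 < k ∧ α ^ k = 1)) := by
  have hAunit := isUnit_of_transpose_mul_mul_self hG hA
  have hroots : A.charpoly.roots.map (·⁻¹) = A.charpoly.roots := by
    rw [← roots_charpoly_inv hAunit, charpoly_inv_of_transpose_mul_mul_self hG hA]
  have hpow_inv (α : K) (k : ℕ) : α⁻¹ ^ k = 1 ↔ α ^ k = 1 := by rw [inv_pow, inv_eq_one]
  refine Multiset.even_card_of_map_involutive inv_involutive ?_ ?_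
  · conv_rhs => rw [← hroots]
    rw [Multiset.filter_map]
    exact congrArg _ (Multiset.filter_congr fun α _ => by simp only [Function.comp, hpow_inv])
  · intro α hα hfix
    obtain ⟨hmem, hnot⟩ := Multiset.mem_filter.mp hα
    have hα0 : α ≠ 0 := ne_of_mem_of_not_mem hmem (zero_notMem_roots_charpoly hAunit)
    exact hnot ⟨2, two_pos, by rw [sq]; nth_rewrite 1 [← hfix]; exact inv_mul_cancel₀ hα0⟩

/-- Over an algebraically closed field, if `A` preserves a nondegenerate symmetric
bilinear form with Gram matrix `G`, then the number of roots of `charpoly A`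
(counted with multiplicity) that are not roots of unity is even. -/
theorem even_card_charpoly_roots_not_rootOfUnity_of_preserves_form
    {K : Type*} [Field K] [IsAlgClosed K] {n : ℕ}
    (G A : Matrix (Fin n) (Fin n) K)
    (hG : IsUnit G) (hGsymm : Gᵀ = G)
    (hA : Aᵀ * G * A = G) :
    Even (Multiset.card
      (A.charpoly.roots.filter fun α => ¬ ∃ k : ℕ, 0 < k ∧ α ^ k = 1)) :=
  even_card_charpoly_roots_not_rootOfUnity_of_preserves_form_general G A hG hA
end
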